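/- Let G be a graph on n vertices with degree sequence d_1, …, d_n and let the assignment Z be i.i.d. vertex randomization: each vertex is independently treated with probability p ∈ (0,1). Use full neighborhood exposure, and suppose the response functions are constant on each exposure event with values Y_i(σ^1_i), Y_i(σ^0_i) ∈ [Y_m, Y_M] where 0 < Y_m. Then Var[τ̂(Z)] ≥ (Y_m²/n²)·Σ_{i=1}^n ( p^{−(d_i+1)} + (1−p)^{−(d_i+1)} − 2 ), a lower bound exponential in each vertex degree. -/
import Mathlib


open Finset
open scoped Classical

noncomputable section

/-- Probability weight of a coin vector of independent Bernoulli(p) cluster coins. -/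
def coinWt (p : ℝ) {J : Type*} [Fintype J] (x : J → Bool) : ℝ :=
  ∏ j, if x j then p else 1 - p

/-- Probability of an event `A` of assignment vectors under cluster randomization. -/
def clusterPr {V : Type*} [Fintype V] {J : Type*} [Fintype J]
    (p : ℝ) (c : V → J) (A : Set (V → Bool)) : ℝ :=
  ∑ x : J → Bool, coinWt p x * (if (fun v => x (c v)) ∈ A then 1 else 0)

/-- The Horvitz–Thompson estimator. -/
def htEst {V : Type*} [Fintype V] (pr : Set (V → Bool) → ℝ)
    (σ1 σ0 : V → Set (V → Bool)) (Y : V → (V → Bool) → ℝ) (z : V → Bool) : ℝ :=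
  (Fintype.card V : ℝ)⁻¹ *
    ∑ i : V, ((if z ∈ σ1 i then Y i z else 0) / pr (σ1 i)
      - (if z ∈ σ0 i then Y i z else 0) / pr (σ0 i))

/-- Variance of the Horvitz–Thompson estimator under cluster randomization. -/
def clusterVar {V : Type*} [Fintype V] {J : Type*} [Fintype J]
    (p : ℝ) (c : V → J) (σ1 σ0 : V → Set (V → Bool)) (Y : V → (V → Bool) → ℝ) : ℝ :=
  (∑ x : J → Bool, coinWt p x *
      (htEst (clusterPr p c) σ1 σ0 Y (fun v => x (c v))) ^ 2)
  - (∑ x : J → Bool, coinWt p x *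
      htEst (clusterPr p c) σ1 σ0 Y (fun v => x (c v))) ^ 2

/-- Full neighborhood exposure to condition `b`. -/
def fullExp {V : Type*} [Fintype V] (G : SimpleGraph V) (b : Bool) (v : V) :
    Set (V → Bool) :=
  {z | z v = b ∧ ∀ u ∈ G.neighborFinset v, z u = b}


/-- indicator that `x` equals `b` on all of `S`. -/
def indOn {V : Type*} (S : Finset V) (b : Bool) (x : V → Bool) : ℝ :=
  if ∀ v ∈ S, x v = b then 1 else 0

section Aux
variable {V : Type*} [Fintype V] {p : ℝ}

lemma sum_prod_bool (g : V → Bool → ℝ) :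
    ∑ x : V → Bool, ∏ v, g v (x v) = ∏ v, (g v true + g v false) := by
  classical
  have h := Finset.prod_univ_sum (fun _ : V => (Finset.univ : Finset Bool)) g
  rw [Fintype.piFinset_univ] at h
  rw [← h]
  exact Finset.prod_congr rfl fun v _ => by simp [Fintype.sum_bool, add_comm]

lemma indOn_eq_prod (S : Finset V) (b : Bool) (x : V → Bool) :
    indOn S b x = ∏ v, (if v ∈ S then (if x v = b then (1:ℝ) else 0) else 1) := by
  rw [Fintype.prod_ite_mem, Finset.prod_boole, indOn]

lemma indOn_nonneg (S : Finset V) (b : Bool) (x : V → Bool) : 0 ≤ indOn S b x := by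
  rw [indOn]; split <;> norm_num

lemma indOn_mul_self (S : Finset V) (b : Bool) (x : V → Bool) :
    indOn S b x * indOn S b x = indOn S b x := by
  rw [indOn]; split <;> norm_num

lemma indOn_mul_indOn (S T : Finset V) (b : Bool) (x : V → Bool) :
    indOn S b x * indOn T b x = indOn (S ∪ T) b x := by
  classical
  simp only [indOn, Finset.forall_mem_union]
  by_cases hS : ∀ v ∈ S, x v = b
  · by_cases hT : ∀ v ∈ T, x v = b
    · rw [if_pos hS, if_pos hT, if_pos ⟨hS, hT⟩]; norm_num
    · rw [if_neg hT,
        if_neg (fun h : (∀ v ∈ S, x v = b) ∧ (∀ v ∈ T, x v = b) => hT h.2)]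
      exact mul_zero _
  · rw [if_neg hS,
      if_neg (fun h : (∀ v ∈ S, x v = b) ∧ (∀ v ∈ T, x v = b) => hS h.1)]
    exact zero_mul _

lemma prob_indOn (S : Finset V) (b : Bool) :
    ∑ x : V → Bool, coinWt p x * indOn S b x = (if b then p else 1 - p) ^ S.card := by
  classical
  have h : ∀ x : V → Bool, coinWt p x * indOn S b x
      = ∏ v, ((if x v then p else 1 - p) * (if v ∈ S then (if x v = b then (1:ℝ) else 0) else 1)) := by
    intro x
    rw [indOn_eq_prod, coinWt, ← Finset.prod_mul_distrib]
  simp only [h]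
  rw [sum_prod_bool (fun v b' => (if b' then p else 1 - p) * (if v ∈ S then (if b' = b then (1:ℝ) else 0) else 1))]
  have h2 : ∀ v : V, ((if (true:Bool) then p else 1 - p) * (if v ∈ S then (if true = b then (1:ℝ) else 0) else 1)
      + (if (false:Bool) then p else 1 - p) * (if v ∈ S then (if false = b then (1:ℝ) else 0) else 1))
      = (if v ∈ S then (if b then p else 1 - p) else 1) := by
    intro v
    by_cases hv : v ∈ S <;> cases b <;> simp [hv] <;> ring
  rw [Finset.prod_congr rfl fun v _ => h2 v, Fintype.prod_ite_mem, Finset.prod_const]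

lemma prob_mixed (hp0 : 0 < p) (hp1 : p < 1) (S T : Finset V) :
    ∑ x : V → Bool, coinWt p x * (indOn S true x * indOn T false x)
      ≤ p ^ S.card * (1 - p) ^ T.card := by
  classical
  have h : ∀ x : V → Bool, coinWt p x * (indOn S true x * indOn T false x)
      = ∏ v, ((if x v then p else 1 - p)
          * (if v ∈ S then (if x v = true then (1:ℝ) else 0) else 1)
          * (if v ∈ T then (if x v = false then (1:ℝ) else 0) else 1)) := by
    intro x
    rw [indOn_eq_prod, indOn_eq_prod, coinWt, ← Finset.prod_mul_distrib,
      ← Finset.prod_mul_distrib]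
    exact Finset.prod_congr rfl fun v _ => by ring
  simp only [h]
  rw [sum_prod_bool (fun v b' => (if b' then p else 1 - p)
      * (if v ∈ S then (if b' = true then (1:ℝ) else 0) else 1)
      * (if v ∈ T then (if b' = false then (1:ℝ) else 0) else 1))]
  have hle : ∏ v, (((if (true:Bool) then p else 1 - p)
          * (if v ∈ S then (if (true:Bool) = true then (1:ℝ) else 0) else 1)
          * (if v ∈ T then (if (true:Bool) = false then (1:ℝ) else 0) else 1))
        + ((if (false:Bool) then p else 1 - p)
          * (if v ∈ S then (if (false:Bool) = true then (1:ℝ) else 0) else 1)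
          * (if v ∈ T then (if (false:Bool) = false then (1:ℝ) else 0) else 1)))
      ≤ ∏ v, ((if v ∈ S then p else 1) * (if v ∈ T then 1 - p else 1)) := by
    apply Finset.prod_le_prod
    · intro v _
      by_cases hvS : v ∈ S <;> by_cases hvT : v ∈ T <;> simp [hvS, hvT] <;> nlinarith
    · intro v _
      by_cases hvS : v ∈ S <;> by_cases hvT : v ∈ T <;> simp [hvS, hvT] <;> nlinarith
  refine hle.trans_eq ?_
  rw [Finset.prod_mul_distrib, Fintype.prod_ite_mem, Fintype.prod_ite_mem,
    Finset.prod_const, Finset.prod_const]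

end Aux

set_option maxHeartbeats 1000000 in
/-- **Exponential variance lower bound under i.i.d. vertex randomization,
general degrees.**  Let `G` be a graph on `n` vertices with degrees `d_i`, let
each vertex be independently treated with probability `p ∈ (0,1)` (cluster
randomization with the identity cluster map), use full neighborhood exposure,
and let the responses be constant on each exposure event with values in
`[Y_m, Y_M]`, `Y_m > 0`.  Then
`Var[τ̂] ≥ (Y_m²/n²)·Σ_i (p^{−(d_i+1)} + (1−p)^{−(d_i+1)} − 2)`. -/
theorem statement18 {V : Type*} [Fintype V] (G : SimpleGraph V)
    (p : ℝ) (hp : p ∈ Set.Ioo (0:ℝ) 1)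
    (Ym YM : ℝ) (hYm : 0 < Ym)
    (Y : V → (V → Bool) → ℝ) (Y1 Y0 : V → ℝ)
    (hY1 : ∀ i, Y1 i ∈ Set.Icc Ym YM) (hY0 : ∀ i, Y0 i ∈ Set.Icc Ym YM)
    (hc1 : ∀ i, ∀ z ∈ fullExp G true i, Y i z = Y1 i)
    (hc0 : ∀ i, ∀ z ∈ fullExp G false i, Y i z = Y0 i) :
    Ym ^ 2 / ((Fintype.card V : ℝ)) ^ 2 *
        (∑ i : V, ((p ^ (G.degree i + 1))⁻¹ + ((1 - p) ^ (G.degree i + 1))⁻¹ - 2))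
      ≤ clusterVar p (id : V → V) (fullExp G true) (fullExp G false) Y := by
  classical
  obtain ⟨hp0, hp1⟩ := hp
  have hp1' : (0:ℝ) < 1 - p := by linarith
  set n : ℝ := (Fintype.card V : ℝ) with hn
  set N : V → Finset V := fun i => insert i (G.neighborFinset i) with hN
  have hNcard : ∀ i, (N i).card = G.degree i + 1 := by
    intro i
    rw [hN]
    simp only
    rw [Finset.card_insert_of_notMem (G.notMem_neighborFinset_self i),
      G.card_neighborFinset_eq_degree]
  set q : Bool → V → ℝ := fun b i => (if b then p else 1 - p) ^ (G.degree i + 1) with hq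
  have hw0 : ∀ b : Bool, 0 < (if b then p else 1 - p) := by
    intro b; cases b <;> simp [hp0, hp1']
  have hw1 : ∀ b : Bool, (if b then p else 1 - p) ≤ 1 := by
    intro b; cases b <;> simp <;> linarith
  have hq0 : ∀ b i, 0 < q b i := by
    intro b i; rw [hq]; exact pow_pos (hw0 b) _
  have hq1 : ∀ b i, q b i ≤ 1 := by
    intro b i; rw [hq]; exact pow_le_one₀ (hw0 b).le (hw1 b)
  set J : Bool → V → (V → Bool) → ℝ := fun b i x => indOn (N i) b x with hJ
  have hz : ∀ x : V → Bool, (fun v => x (id v)) = x := fun _ => rfl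
  -- membership characterization
  have hmem : ∀ (b : Bool) (i : V) (x : V → Bool),
      (x ∈ fullExp G b i) ↔ ∀ v ∈ N i, x v = b := by
    intro b i x
    simp [fullExp, hN, Finset.forall_mem_insert]
  -- indicator of exposure
  have hind : ∀ (b : Bool) (i : V) (x : V → Bool),
      (if (fun v => x (id v)) ∈ fullExp G b i then (1:ℝ) else 0) = indOn (N i) b x := by
    intro b i x
    show (if x ∈ fullExp G b i then (1:ℝ) else 0) = indOn (N i) b x
    by_cases h : x ∈ fullExp G b i
    · rw [if_pos h, indOn, if_pos ((hmem b i x).mp h)]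
    · rw [if_neg h, indOn, if_neg (fun hh => h ((hmem b i x).mpr hh))]
  -- exposure probabilities
  have hpr : ∀ b i, clusterPr p (id : V → V) (fullExp G b i) = q b i := by
    intro b i
    have e : clusterPr p (id : V → V) (fullExp G b i)
        = ∑ x : V → Bool, coinWt p x * indOn (N i) b x := by
      rw [clusterPr]
      exact Finset.sum_congr rfl fun x _ => by rw [hind]
    rw [e, prob_indOn, hNcard, hq]
  -- the summands of the HT estimator
  set s : V → (V → Bool) → ℝ :=
    fun i x => Y1 i / q true i * J true i x - Y0 i / q false i * J false i x with hs
  -- HT estimator formula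
  have hht : ∀ x : V → Bool,
      htEst (clusterPr p (id : V → V)) (fullExp G true) (fullExp G false) Y (fun v => x (id v))
        = n⁻¹ * ∑ i, s i x := by
    intro x
    rw [htEst]
    have hn' : ((Fintype.card V : ℝ))⁻¹ = n⁻¹ := rfl
    rw [hn']
    congr 1
    refine Finset.sum_congr rfl fun i _ => ?_
    have e1 : (if (fun v => x (id v)) ∈ fullExp G true i then Y i (fun v => x (id v)) else 0)
        = Y1 i * J true i x := by
      show (if x ∈ fullExp G true i then Y i x else 0) = Y1 i * indOn (N i) true x
      by_cases h : x ∈ fullExp G true i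
      · rw [if_pos h, hc1 i x h, indOn, if_pos ((hmem true i x).mp h), mul_one]
      · rw [if_neg h, indOn, if_neg (fun hh => h ((hmem true i x).mpr hh)), mul_zero]
    have e0 : (if (fun v => x (id v)) ∈ fullExp G false i then Y i (fun v => x (id v)) else 0)
        = Y0 i * J false i x := by
      show (if x ∈ fullExp G false i then Y i x else 0) = Y0 i * indOn (N i) false x
      by_cases h : x ∈ fullExp G false i
      · rw [if_pos h, hc0 i x h, indOn, if_pos ((hmem false i x).mp h), mul_one]
      · rw [if_neg h, indOn, if_neg (fun hh => h ((hmem false i x).mpr hh)), mul_zero]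
    rw [e1, e0, hpr true i, hpr false i, hs]
    ring
  -- basic expectations
  have hEJ : ∀ b i, ∑ x : V → Bool, coinWt p x * J b i x = q b i := by
    intro b i
    show ∑ x : V → Bool, coinWt p x * indOn (N i) b x = q b i
    rw [prob_indOn, hNcard, hq]
  have hEJJsame : ∀ (b : Bool) (i j : V),
      q b i * q b j ≤ ∑ x : V → Bool, coinWt p x * (J b i x * J b j x) := by
    intro b i j
    have e : ∑ x : V → Bool, coinWt p x * (J b i x * J b j x)
        = (if b then p else 1 - p) ^ (N i ∪ N j).card := by
      rw [← prob_indOn (N i ∪ N j) b]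
      refine Finset.sum_congr rfl fun x _ => ?_
      show coinWt p x * (indOn (N i) b x * indOn (N j) b x)
          = coinWt p x * indOn (N i ∪ N j) b x
      rw [indOn_mul_indOn]
    rw [e]
    have e2 : q b i * q b j = (if b then p else 1 - p) ^ ((N i).card + (N j).card) := by
      rw [pow_add, hNcard, hNcard, hq]
    rw [e2]
    exact pow_le_pow_of_le_one (hw0 b).le (hw1 b) (Finset.card_union_le _ _)
  have hEJJmix : ∀ i j, ∑ x : V → Bool, coinWt p x * (J true i x * J false j x)
      ≤ q true i * q false j := by
    intro i j
    have h := prob_mixed (p := p) hp0 hp1 (N i) (N j)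
    rw [hNcard, hNcard] at h
    exact h
  have hEJJmix' : ∀ i j, ∑ x : V → Bool, coinWt p x * (J false i x * J true j x)
      ≤ q false i * q true j := by
    intro i j
    have h2 := hEJJmix j i
    rw [mul_comm (q true j) (q false i)] at h2
    refine le_trans (le_of_eq ?_) h2
    exact Finset.sum_congr rfl fun x _ => by ring
  -- expectation of a summand
  have hEs : ∀ i, ∑ x : V → Bool, coinWt p x * s i x
      = Y1 i / q true i * q true i - Y0 i / q false i * q false i := by
    intro i
    have e : ∑ x : V → Bool, coinWt p x * s i x
        = Y1 i / q true i * (∑ x : V → Bool, coinWt p x * J true i x)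
          - Y0 i / q false i * (∑ x : V → Bool, coinWt p x * J false i x) := by
      simp only [Finset.mul_sum, ← Finset.sum_sub_distrib]
      refine Finset.sum_congr rfl fun x _ => ?_
      simp only [hs]
      ring
    rw [e, hEJ, hEJ]
  -- expectation of a product of summands
  have hEss : ∀ i j, ∑ x : V → Bool, coinWt p x * (s i x * s j x)
      = Y1 i / q true i * (Y1 j / q true j)
          * (∑ x : V → Bool, coinWt p x * (J true i x * J true j x))
      + Y0 i / q false i * (Y0 j / q false j)
          * (∑ x : V → Bool, coinWt p x * (J false i x * J false j x))
      - Y1 i / q true i * (Y0 j / q false j)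
          * (∑ x : V → Bool, coinWt p x * (J true i x * J false j x))
      - Y0 i / q false i * (Y1 j / q true j)
          * (∑ x : V → Bool, coinWt p x * (J false i x * J true j x)) := by
    intro i j
    simp only [Finset.mul_sum, ← Finset.sum_add_distrib, ← Finset.sum_sub_distrib]
    refine Finset.sum_congr rfl fun x _ => ?_
    simp only [hs]
    ring
  -- variance expansion
  have hvar : clusterVar p (id : V → V) (fullExp G true) (fullExp G false) Y
      = n⁻¹ ^ 2 * ∑ i, ∑ j, ((∑ x : V → Bool, coinWt p x * (s i x * s j x))
          - (∑ x : V → Bool, coinWt p x * s i x) * (∑ x : V → Bool, coinWt p x * s j x)) := by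
    rw [clusterVar]
    simp only [hht]
    have eA : ∑ x : V → Bool, coinWt p x * (n⁻¹ * ∑ i, s i x) ^ 2
        = n⁻¹ ^ 2 * ∑ i, ∑ j, ∑ x : V → Bool, coinWt p x * (s i x * s j x) := by
      have e1 : ∑ x : V → Bool, coinWt p x * (n⁻¹ * ∑ i, s i x) ^ 2
          = n⁻¹ ^ 2 * ∑ x : V → Bool, coinWt p x * (∑ i, s i x) ^ 2 := by
        rw [Finset.mul_sum]
        exact Finset.sum_congr rfl fun x _ => by ring
      rw [e1]
      congr 1
      have e2 : ∀ x : V → Bool, coinWt p x * (∑ i, s i x) ^ 2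
          = ∑ i, ∑ j, coinWt p x * (s i x * s j x) := by
        intro x
        rw [sq, Finset.sum_mul_sum, Finset.mul_sum]
        exact Finset.sum_congr rfl fun i _ => by rw [Finset.mul_sum]
      rw [Finset.sum_congr rfl fun x _ => e2 x, Finset.sum_comm]
      exact Finset.sum_congr rfl fun i _ => Finset.sum_comm
    have eB : ∑ x : V → Bool, coinWt p x * (n⁻¹ * ∑ i, s i x)
        = n⁻¹ * ∑ i, ∑ x : V → Bool, coinWt p x * s i x := by
      calc ∑ x : V → Bool, coinWt p x * (n⁻¹ * ∑ i, s i x)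
          = ∑ x : V → Bool, ∑ i, n⁻¹ * (coinWt p x * s i x) := by
            refine Finset.sum_congr rfl fun x _ => ?_
            rw [Finset.mul_sum, Finset.mul_sum]
            exact Finset.sum_congr rfl fun i _ => by ring
        _ = ∑ i, ∑ x : V → Bool, n⁻¹ * (coinWt p x * s i x) := Finset.sum_comm
        _ = n⁻¹ * ∑ i, ∑ x : V → Bool, coinWt p x * s i x := by
            rw [Finset.mul_sum]
            exact Finset.sum_congr rfl fun i _ => (Finset.mul_sum _ _ _).symm
    rw [eA, eB, mul_pow, pow_two (∑ i, ∑ x : V → Bool, coinWt p x * s i x),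
      Finset.sum_mul_sum, ← mul_sub, ← Finset.sum_sub_distrib]
    congr 1
    refine Finset.sum_congr rfl fun i _ => ?_
    rw [← Finset.sum_sub_distrib]
  -- nonnegativity of all covariance terms
  have ha : ∀ i, 0 ≤ Y1 i / q true i :=
    fun i => div_nonneg (le_trans hYm.le (hY1 i).1) (hq0 true i).le
  have hb : ∀ i, 0 ≤ Y0 i / q false i :=
    fun i => div_nonneg (le_trans hYm.le (hY0 i).1) (hq0 false i).le
  have hDnn : ∀ i j, 0 ≤ (∑ x : V → Bool, coinWt p x * (s i x * s j x))
      - (∑ x : V → Bool, coinWt p x * s i x) * (∑ x : V → Bool, coinWt p x * s j x) := by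
    intro i j
    rw [hEss i j, hEs i, hEs j]
    have t1 : 0 ≤ Y1 i / q true i * (Y1 j / q true j)
        * ((∑ x : V → Bool, coinWt p x * (J true i x * J true j x)) - q true i * q true j) :=
      mul_nonneg (mul_nonneg (ha i) (ha j)) (sub_nonneg.2 (hEJJsame true i j))
    have t2 : 0 ≤ Y0 i / q false i * (Y0 j / q false j)
        * ((∑ x : V → Bool, coinWt p x * (J false i x * J false j x)) - q false i * q false j) :=
      mul_nonneg (mul_nonneg (hb i) (hb j)) (sub_nonneg.2 (hEJJsame false i j))
    have t3 : 0 ≤ Y1 i / q true i * (Y0 j / q false j)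
        * (q true i * q false j - ∑ x : V → Bool, coinWt p x * (J true i x * J false j x)) :=
      mul_nonneg (mul_nonneg (ha i) (hb j)) (sub_nonneg.2 (hEJJmix i j))
    have t4 : 0 ≤ Y0 i / q false i * (Y1 j / q true j)
        * (q false i * q true j - ∑ x : V → Bool, coinWt p x * (J false i x * J true j x)) :=
      mul_nonneg (mul_nonneg (hb i) (ha j)) (sub_nonneg.2 (hEJJmix' i j))
    nlinarith [t1, t2, t3, t4]
  -- diagonal lower bound
  have hDiag : ∀ i, Ym ^ 2 * ((q true i)⁻¹ + (q false i)⁻¹ - 2)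
      ≤ (∑ x : V → Bool, coinWt p x * (s i x * s i x))
        - (∑ x : V → Bool, coinWt p x * s i x) * (∑ x : V → Bool, coinWt p x * s i x) := by
    intro i
    have hsame : ∀ b : Bool, ∑ x : V → Bool, coinWt p x * (J b i x * J b i x) = q b i := by
      intro b
      rw [← hEJ b i]
      refine Finset.sum_congr rfl fun x _ => ?_
      show coinWt p x * (indOn (N i) b x * indOn (N i) b x) = coinWt p x * indOn (N i) b x
      rw [indOn_mul_self]
    rw [hEss i i, hEs i, hsame true, hsame false]
    have hA := hq0 true i
    have hA1 := hq1 true i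
    have hB := hq0 false i
    have hB1 := hq1 false i
    have hAinv : q true i * (q true i)⁻¹ = 1 := mul_inv_cancel₀ hA.ne'
    have hBinv : q false i * (q false i)⁻¹ = 1 := mul_inv_cancel₀ hB.ne'
    have p1 : Y1 i / q true i * (Y0 i / q false i)
          * (∑ x : V → Bool, coinWt p x * (J true i x * J false i x))
        ≤ Y1 i / q true i * (Y0 i / q false i) * (q true i * q false i) :=
      mul_le_mul_of_nonneg_left (hEJJmix i i) (mul_nonneg (ha i) (hb i))
    have p2 : Y0 i / q false i * (Y1 i / q true i)
          * (∑ x : V → Bool, coinWt p x * (J false i x * J true i x))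
        ≤ Y0 i / q false i * (Y1 i / q true i) * (q false i * q true i) :=
      mul_le_mul_of_nonneg_left (hEJJmix' i i) (mul_nonneg (hb i) (ha i))
    have e2 : Y1 i / q true i * (Y1 i / q true i) * q true i
          + Y0 i / q false i * (Y0 i / q false i) * q false i
          - Y1 i / q true i * (Y0 i / q false i) * (q true i * q false i)
          - Y0 i / q false i * (Y1 i / q true i) * (q false i * q true i)
          - (Y1 i / q true i * q true i - Y0 i / q false i * q false i)
            * (Y1 i / q true i * q true i - Y0 i / q false i * q false i)
        = Y1 i ^ 2 * ((q true i)⁻¹ - 1) + Y0 i ^ 2 * ((q false i)⁻¹ - 1) := by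
      field_simp
      ring
    have s1 : Ym ^ 2 * ((q true i)⁻¹ - 1) ≤ Y1 i ^ 2 * ((q true i)⁻¹ - 1) :=
      mul_le_mul_of_nonneg_right
        (pow_le_pow_left₀ hYm.le (hY1 i).1 2)
        (sub_nonneg.2 ((one_le_inv₀ hA).2 hA1))
    have s0 : Ym ^ 2 * ((q false i)⁻¹ - 1) ≤ Y0 i ^ 2 * ((q false i)⁻¹ - 1) :=
      mul_le_mul_of_nonneg_right
        (pow_le_pow_left₀ hYm.le (hY0 i).1 2)
        (sub_nonneg.2 ((one_le_inv₀ hB).2 hB1))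
    nlinarith [p1, p2, e2, s1, s0]
  -- assembling everything
  have hgoal : Ym ^ 2 / n ^ 2 *
      (∑ i : V, ((p ^ (G.degree i + 1))⁻¹ + ((1 - p) ^ (G.degree i + 1))⁻¹ - 2))
      = n⁻¹ ^ 2 * ∑ i, Ym ^ 2 * ((q true i)⁻¹ + (q false i)⁻¹ - 2) := by
    rw [Finset.mul_sum, Finset.mul_sum]
    refine Finset.sum_congr rfl fun i _ => ?_
    have e1 : q true i = p ^ (G.degree i + 1) := by rw [hq]; norm_num
    have e0 : q false i = (1 - p) ^ (G.degree i + 1) := by rw [hq]; norm_num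
    rw [e1, e0, div_eq_mul_inv, ← inv_pow]
    ring
  rw [hvar, hgoal]
  refine mul_le_mul_of_nonneg_left ?_ (by positivity)
  refine Finset.sum_le_sum fun i _ => ?_
  calc Ym ^ 2 * ((q true i)⁻¹ + (q false i)⁻¹ - 2)
      ≤ (∑ x : V → Bool, coinWt p x * (s i x * s i x))
        - (∑ x : V → Bool, coinWt p x * s i x) * (∑ x : V → Bool, coinWt p x * s i x) :=
        hDiag i
    _ ≤ ∑ j, ((∑ x : V → Bool, coinWt p x * (s i x * s j x))
        - (∑ x : V → Bool, coinWt p x * s i x) * (∑ x : V → Bool, coinWt p x * s j x)) :=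
        Finset.single_le_sum (fun j _ => hDnn i j) (Finset.mem_univ i)

end
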